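/- arXiv:2509.21418 — 5 statements merged into one kernel-verified Lean document; each statement's English description precedes it below -/
import Mathlib

section
/- Let d ≥ 1 and let M₁, M₂ be d×d complex matrices. For k = 1, 2 define Pₖ : ℂ × ℂ^{d+1} → ℂ by Pₖ(z₀, (z₁, …, z_d, z_f)) = det(z₀·I_d + z_f·Mₖ), a polynomial function not depending on z₁, …, z_d. Then there exists an invertible matrix B ∈ GL_{d+1}(ℂ) such that P₂(z₀, w) = P₁(z₀, w·B) for all z₀ ∈ ℂ and all row vectors w ∈ ℂ^{d+1}, if and only if there exists a nonzero scalar α ∈ ℂ such that det(z₀·I_d + z·M₁) = det(z₀·I_d + (α·z)·M₂) for all z₀, z ∈ ℂ. -/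
/-- Let `d ≥ 1` and `M₁, M₂` be `d × d` complex matrices. For `k = 1, 2` let
`Pₖ (z₀, (z₁, …, z_d, z_f)) = det (z₀ • I_d + z_f • Mₖ)`, a polynomial function on
`ℂ × ℂ^(d+1)` not depending on `z₁, …, z_d` (the characteristic polynomial of the solvable Lie
algebra obtained as a one-dimensional extension of a `d`-dimensional abelian nilradical by the
derivation `Mₖ`).  Then there is an invertible `B ∈ GL_{d+1}(ℂ)` with
`P₂ (z₀, w) = P₁ (z₀, w·B)` for all `z₀, w`, iff there is a nonzero `α ∈ ℂ` with
`det (z₀ • I_d + z • M₁) = det (z₀ • I_d + (α * z) • M₂)` for all `z₀, z`. -/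
theorem lie_spectral_equivalence_iff_matrix_spectral_equivalence
    (d : ℕ) (hd : 1 ≤ d) (M₁ M₂ : Matrix (Fin d) (Fin d) ℂ)
    (P₁ P₂ : ℂ → (Fin (d + 1) → ℂ) → ℂ)
    (hP₁ : ∀ (z₀ : ℂ) (w : Fin (d + 1) → ℂ),
      P₁ z₀ w = (z₀ • (1 : Matrix (Fin d) (Fin d) ℂ) + w (Fin.last d) • M₁).det)
    (hP₂ : ∀ (z₀ : ℂ) (w : Fin (d + 1) → ℂ),
      P₂ z₀ w = (z₀ • (1 : Matrix (Fin d) (Fin d) ℂ) + w (Fin.last d) • M₂).det) :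
    (∃ B : GL (Fin (d + 1)) ℂ, ∀ (z₀ : ℂ) (w : Fin (d + 1) → ℂ),
        P₂ z₀ w = P₁ z₀ (Matrix.vecMul w (B : Matrix (Fin (d + 1)) (Fin (d + 1)) ℂ))) ↔
      (∃ α : ℂ, α ≠ 0 ∧ ∀ z₀ z : ℂ,
        (z₀ • (1 : Matrix (Fin d) (Fin d) ℂ) + z • M₁).det =
          (z₀ • (1 : Matrix (Fin d) (Fin d) ℂ) + (α * z) • M₂).det) := by

  constructor
  · rintro ⟨B, hB⟩
    set n := Fin.last d with hn
    have key : ∀ (z₀ : ℂ) (w : Fin (d + 1) → ℂ),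
        (z₀ • (1 : Matrix (Fin d) (Fin d) ℂ) + w n • M₂).det =
          (z₀ • (1 : Matrix (Fin d) (Fin d) ℂ) +
            (Matrix.vecMul w (B : Matrix (Fin (d + 1)) (Fin (d + 1)) ℂ) n) • M₁).det := by
      intro z₀ w
      have h := hB z₀ w
      rw [hP₂, hP₁] at h
      exact h
    have vm : ∀ (j : Fin (d + 1)) (t : ℂ),
        Matrix.vecMul (Pi.single j t) (B : Matrix (Fin (d + 1)) (Fin (d + 1)) ℂ) n =
          t * (B : Matrix (Fin (d + 1)) (Fin (d + 1)) ℂ) j n := by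
      intro j t
      simp [Matrix.vecMul, dotProduct, Pi.single_apply, ite_mul]
    set β := (B : Matrix (Fin (d + 1)) (Fin (d + 1)) ℂ) n n with hβ
    by_cases hb : β ≠ 0
    · refine ⟨β⁻¹, inv_ne_zero hb, fun z₀ z => ?_⟩
      have h := key z₀ (Pi.single n (z / β))
      rw [vm, ← hβ, div_mul_cancel₀ _ hb] at h
      simp only [Pi.single_eq_same] at h
      rw [div_eq_inv_mul] at h
      exact h.symm
    · push_neg at hb
      -- find i with B i n ≠ 0
      have hinv : ((B⁻¹ : GL (Fin (d + 1)) ℂ) : Matrix (Fin (d + 1)) (Fin (d + 1)) ℂ) *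
          (B : Matrix (Fin (d + 1)) (Fin (d + 1)) ℂ) = 1 := B.inv_mul
      have hsum : ∑ i, ((B⁻¹ : GL (Fin (d + 1)) ℂ) :
          Matrix (Fin (d + 1)) (Fin (d + 1)) ℂ) n i *
          (B : Matrix (Fin (d + 1)) (Fin (d + 1)) ℂ) i n = 1 := by
        have := congrFun (congrFun hinv n) n
        rw [Matrix.mul_apply] at this
        simpa using this
      have hex : ∃ i, (B : Matrix (Fin (d + 1)) (Fin (d + 1)) ℂ) i n ≠ 0 := by
        by_contra hc
        push_neg at hc
        rw [Finset.sum_eq_zero (fun i _ => by rw [hc i, mul_zero])] at hsum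
        exact zero_ne_one hsum
      obtain ⟨i, hi⟩ := hex
      have hin : i ≠ n := fun h => hi (by rw [h]; exact hb)
      have hM₁ : ∀ (z₀ s : ℂ),
          (z₀ • (1 : Matrix (Fin d) (Fin d) ℂ) + s • M₁).det =
            (z₀ • (1 : Matrix (Fin d) (Fin d) ℂ)).det := by
        intro z₀ s
        have h := key z₀ (Pi.single i (s / (B : Matrix (Fin (d + 1)) (Fin (d + 1)) ℂ) i n))
        rw [vm, div_mul_cancel₀ _ hi] at h
        rw [Pi.single_eq_of_ne (Ne.symm hin), zero_smul, add_zero] at h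
        exact h.symm
      refine ⟨1, one_ne_zero, fun z₀ z => ?_⟩
      have h := key z₀ (Pi.single n z)
      rw [vm, ← hβ, hb, mul_zero, Pi.single_eq_same, zero_smul, add_zero] at h
      rw [one_mul, hM₁ z₀ z, ← h]
  · rintro ⟨α, hα, hsp⟩
    refine ⟨⟨α⁻¹ • 1, α • 1, ?_, ?_⟩, ?_⟩
    · rw [Matrix.smul_mul, Matrix.mul_smul, smul_smul, inv_mul_cancel₀ hα, one_smul,
        Matrix.one_mul]
    · rw [Matrix.smul_mul, Matrix.mul_smul, smul_smul, mul_inv_cancel₀ hα, one_smul,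
        Matrix.one_mul]
    · intro z₀ w
      rw [hP₂, hP₁]
      have hw : Matrix.vecMul w ((α⁻¹ • 1 : Matrix (Fin (d + 1)) (Fin (d + 1)) ℂ))
          (Fin.last d) = α⁻¹ * w (Fin.last d) := by
        simp [Matrix.vecMul, dotProduct, Matrix.smul_apply, Matrix.one_apply,
          mul_ite, mul_zero, mul_comm]
      rw [hw]
      have := hsp z₀ (α⁻¹ * w (Fin.last d))
      rw [← mul_assoc, mul_inv_cancel₀ hα, one_mul] at this
      exact this.symm
end

section
/- Let 𝔰 be an N-dimensional complex solvable Lie algebra with ordered basis (x₁, …, x_N), and let 𝔫 ⊆ 𝔰 be a nilpotent Lie ideal with [𝔰,𝔰] ⊆ 𝔫. Then k(𝔰) ≥ |Δ|, i.e., the number of distinct irreducible factors (up to scalar multiples) of the characteristic polynomial Q_𝔰 is at least the number of distinct weights of the action of 𝔰 on 𝔫. -/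
/-- The characteristic polynomial `Q_L(z₀, …, z_N) = det (z₀ I + z₁ ad x₁ + ⋯ + z_N ad x_N)`
of an `N`-dimensional complex Lie algebra with ordered basis `(x₁, …, x_N)`; the variable of
index `0` is `z₀` and the variable of index `k.succ` is attached to the basis vector `x_k`. -/
noncomputable def lieCharPoly (N : ℕ) (L : Type) [LieRing L] [LieAlgebra ℂ L]
    (b : Module.Basis (Fin N) ℂ L) : MvPolynomial (Fin (N + 1)) ℂ :=
  Matrix.det
    ((MvPolynomial.X 0 : MvPolynomial (Fin (N + 1)) ℂ) •
        (1 : Matrix (Fin N) (Fin N) (MvPolynomial (Fin (N + 1)) ℂ)) +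
      ∑ k : Fin N,
        (MvPolynomial.X k.succ : MvPolynomial (Fin (N + 1)) ℂ) •
          ((LinearMap.toMatrix b b (LieAlgebra.ad ℂ L (b k))).map (MvPolynomial.C)))

/-- `k(Q)`: the number of distinct irreducible factors of `Q` up to scalar multiples, i.e. the
cardinality of the set of associate classes of irreducible polynomials dividing `Q`. -/
noncomputable def numIrreducibleFactors {σ : Type} (Q : MvPolynomial σ ℂ) : ℕ :=
  {a : Associates (MvPolynomial σ ℂ) | Irreducible a ∧ a ∣ Associates.mk Q}.ncard

/-- The weight space `V_α ⊆ 𝔫` of a linear functional `α : 𝔰 → ℂ`: the set of `v ∈ 𝔫` lying,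
for every `x ∈ 𝔰`, in the generalized eigenspace of `(ad x)|_𝔫` for the eigenvalue `α x`. -/
noncomputable def lieWeightSpace (𝔰 : Type) [LieRing 𝔰] [LieAlgebra ℂ 𝔰]
    (𝔫 : LieIdeal ℂ 𝔰) (α : Module.Dual ℂ 𝔰) : Submodule ℂ ↥𝔫 :=
  ⨅ x : 𝔰, Module.End.maxGenEigenspace (LieModule.toEnd ℂ 𝔰 ↥𝔫 x) (α x)

/-- The set of weights `Δ`: linear functionals with nonzero weight space. -/
noncomputable def lieWeightSet (𝔰 : Type) [LieRing 𝔰] [LieAlgebra ℂ 𝔰]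
    (𝔫 : LieIdeal ℂ 𝔰) : Set (Module.Dual ℂ 𝔰) :=
  {α | lieWeightSpace 𝔰 𝔫 α ≠ ⊥}

/-!
If `α` is a weight, an eigenvector of `(ad x)|_𝔫` for `α x` is one of `ad x`, so `α x` is an
eigenvalue of `ad x` for every `x`. Hence `Q_𝔰(z₀, z)` vanishes on the hyperplane
`z₀ = -α(∑ zₖ xₖ)`, and the linear polynomial `z₀ + ∑ α(xₖ) zₖ` divides `Q_𝔰`. These linear
polynomials are irreducible, and being monic in `z₀` they are associated only when equal, which
happens only for equal weights.
-/

namespace MvPolynomial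

variable {R : Type*} [CommRing R] {n : ℕ}

theorem finSuccEquiv_rename_succ (q : MvPolynomial (Fin n) R) :
    finSuccEquiv R n (rename Fin.succ q) = Polynomial.C q := by
  induction q using MvPolynomial.induction_on with
  | C a => simp [finSuccEquiv_apply]
  | add p q hp hq => simp [hp, hq]
  | mul_X p k hp => simp [hp, finSuccEquiv_X_succ]

theorem finSuccEquiv_X_zero_add_rename_succ (q : MvPolynomial (Fin n) R) :
    finSuccEquiv R n (X 0 + rename Fin.succ q) = Polynomial.X + Polynomial.C q := by
  rw [map_add, finSuccEquiv_X_zero, finSuccEquiv_rename_succ]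

theorem associated_X_zero_add_rename_succ_iff {q q' : MvPolynomial (Fin n) R} :
    Associated (X 0 + rename Fin.succ q) (X 0 + rename Fin.succ q') ↔ q = q' := by
  refine ⟨fun h => ?_, fun h => h ▸ Associated.refl _⟩
  have h' := h.map (finSuccEquiv R n)
  rw [finSuccEquiv_X_zero_add_rename_succ, finSuccEquiv_X_zero_add_rename_succ] at h'
  exact Polynomial.C_injective <| add_left_cancel <|
    Polynomial.eq_of_monic_of_associated (Polynomial.monic_X_add_C q)
      (Polynomial.monic_X_add_C q') h'

variable [IsDomain R]

theorem irreducible_X_zero_add_rename_succ (q : MvPolynomial (Fin n) R) :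
    Irreducible (X 0 + rename Fin.succ q) := by
  rw [← MulEquiv.irreducible_iff (finSuccEquiv R n), finSuccEquiv_X_zero_add_rename_succ,
    ← sub_neg_eq_add, ← map_neg]
  exact Polynomial.irreducible_X_sub_C _

theorem X_zero_add_rename_succ_dvd [Infinite R] {p : MvPolynomial (Fin (n + 1)) R}
    {q : MvPolynomial (Fin n) R} (h : ∀ c : Fin n → R, eval (Fin.cons (-eval c q) c) p = 0) :
    X 0 + rename Fin.succ q ∣ p := by
  have hroot : (finSuccEquiv R n p).IsRoot (-q) := by
    refine funext fun c => ?_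
    rw [map_zero, ← h c, eval_eq_eval_mv_eval', Polynomial.eval_map, ← map_neg,
      Polynomial.eval₂_at_apply]
  rw [← map_dvd_iff (finSuccEquiv R n), finSuccEquiv_X_zero_add_rename_succ, ← sub_neg_eq_add,
    ← map_neg]
  exact Polynomial.dvd_iff_isRoot.2 hroot

end MvPolynomial

theorem finite_setOf_irreducible_dvd {M : Type*} [CommMonoidWithZero M]
    [UniqueFactorizationMonoid M] {a : M} (ha : a ≠ 0) :
    {p : Associates M | Irreducible p ∧ p ∣ Associates.mk a}.Finite :=
  letI : Fintype {p : Associates M | p ∣ Associates.mk a} :=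
    UniqueFactorizationMonoid.fintypeSubtypeDvd _ (Associates.mk_ne_zero.2 ha)
  (Set.toFinite {p | p ∣ Associates.mk a}).subset fun _ hp => hp.2

theorem ncard_le_numIrreducibleFactors {σ : Type} {ι : Type*} {Q : MvPolynomial σ ℂ}
    (hQ : Q ≠ 0) {S : Set ι} (f : ι → MvPolynomial σ ℂ) (hirr : ∀ i ∈ S, Irreducible (f i))
    (hdvd : ∀ i ∈ S, f i ∣ Q) (hinj : ∀ i ∈ S, ∀ j ∈ S, Associated (f i) (f j) → i = j) :
    S.ncard ≤ numIrreducibleFactors Q :=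
  Set.ncard_le_ncard_of_injOn (fun i => Associates.mk (f i))
    (fun i hi => ⟨Associates.irreducible_mk.2 (hirr i hi), Associates.mk_dvd_mk.2 (hdvd i hi)⟩)
    (fun i hi j hj h => hinj i hi j hj (Associates.mk_eq_mk_iff_associated.1 h))
    (finite_setOf_irreducible_dvd hQ)

open MvPolynomial LieAlgebra

theorem Module.End.HasEigenvalue.det_sub_smul_one_eq_zero {K V : Type*} [Field K]
    [AddCommGroup V] [Module K V] [FiniteDimensional K V] {f : Module.End K V} {μ : K}
    (h : f.HasEigenvalue μ) : LinearMap.det (f - μ • 1) = 0 :=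
  LinearMap.det_eq_zero_iff_ker_ne_bot.2 (by rwa [← Module.End.eigenspace_def])

section LieCharPoly

variable {L : Type} [LieRing L] [LieAlgebra ℂ L] {N : ℕ} (b : Module.Basis (Fin N) ℂ L)

theorem hasEigenvalue_ad_of_mem_lieWeightSet {𝔫 : LieIdeal ℂ L} {α : Module.Dual ℂ L}
    (hα : α ∈ lieWeightSet L 𝔫) (x : L) : (ad ℂ L x).HasEigenvalue (α x) := by
  have hgen : (LieModule.toEnd ℂ L 𝔫 x).HasUnifEigenvalue (α x) ⊤ :=
    ne_bot_of_le_ne_bot hα (iInf_le _ x)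
  have heig : (LieModule.toEnd ℂ L 𝔫 x).HasEigenvalue (α x) := hgen.lt zero_lt_one
  obtain ⟨v, hv, hv0⟩ := heig.exists_hasEigenvector
  refine Module.End.hasEigenvalue_of_hasEigenvector (x := (v : L)) ⟨?_, by simpa using hv0⟩
  rw [Module.End.mem_eigenspace_iff] at hv ⊢
  exact congrArg Subtype.val hv

theorem eval_lieCharPoly (z₀ : ℂ) (c : Fin N → ℂ) :
    eval (Fin.cons z₀ c) (lieCharPoly N L b) =
      LinearMap.det (z₀ • 1 + ad ℂ L (∑ k, c k • b k)) := by
  rw [lieCharPoly, RingHom.map_det, ← LinearMap.det_toMatrix b]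
  congr 1
  ext i j
  simp [Matrix.one_apply, Matrix.sum_apply, LinearMap.toMatrix_one, map_sum, apply_ite]

theorem lieCharPoly_ne_zero : lieCharPoly N L b ≠ 0 := fun h => by
  simpa [h] using eval_lieCharPoly b 1 0

noncomputable def linearFormPoly (α : Module.Dual ℂ L) : MvPolynomial (Fin N) ℂ :=
  ∑ k, C (α (b k)) * X k

theorem eval_linearFormPoly (α : Module.Dual ℂ L) (c : Fin N → ℂ) :
    eval c (linearFormPoly b α) = α (∑ k, c k • b k) := by
  simp [linearFormPoly, mul_comm]

theorem linearFormPoly_injective : Function.Injective (linearFormPoly b) := fun α β h =>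
  b.ext fun k => by
    simpa [eval_linearFormPoly, Pi.single_apply] using congrArg (eval (Pi.single k 1)) h

theorem X_zero_add_rename_succ_linearFormPoly_dvd_lieCharPoly {𝔫 : LieIdeal ℂ L}
    {α : Module.Dual ℂ L} (hα : α ∈ lieWeightSet L 𝔫) :
    X 0 + rename Fin.succ (linearFormPoly b α) ∣ lieCharPoly N L b := by
  have : FiniteDimensional ℂ L := b.finiteDimensional_of_finite
  refine X_zero_add_rename_succ_dvd fun c => ?_
  rw [eval_lieCharPoly, eval_linearFormPoly, neg_smul, neg_add_eq_sub]
  exact (hasEigenvalue_ad_of_mem_lieWeightSet hα _).det_sub_smul_one_eq_zero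

end LieCharPoly

theorem numIrreducibleFactors_ge_card_weights_general
    (N : ℕ) (𝔰 : Type) [LieRing 𝔰] [LieAlgebra ℂ 𝔰]
    (b : Module.Basis (Fin N) ℂ 𝔰)
    (𝔫 : LieIdeal ℂ 𝔰) :
    numIrreducibleFactors (lieCharPoly N 𝔰 b) ≥ (lieWeightSet 𝔰 𝔫).ncard :=
  ncard_le_numIrreducibleFactors (lieCharPoly_ne_zero b)
    (fun α => X 0 + rename Fin.succ (linearFormPoly b α))
    (fun _ _ => irreducible_X_zero_add_rename_succ _)
    (fun _ hα => X_zero_add_rename_succ_linearFormPoly_dvd_lieCharPoly b hα)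
    (fun _ _ _ _ h => linearFormPoly_injective b (associated_X_zero_add_rename_succ_iff.1 h))

/-- If `𝔰` is an `N`-dimensional complex solvable Lie algebra with ordered
basis, and `𝔫 ⊆ 𝔰` is a nilpotent Lie ideal with `[𝔰,𝔰] ⊆ 𝔫`, then `k(𝔰) ≥ |Δ|`. -/
theorem numIrreducibleFactors_ge_card_weights
    (N : ℕ) (𝔰 : Type) [LieRing 𝔰] [LieAlgebra ℂ 𝔰] [LieAlgebra.IsSolvable 𝔰]
    (b : Module.Basis (Fin N) ℂ 𝔰)
    (𝔫 : LieIdeal ℂ 𝔰) (hnil : LieRing.IsNilpotent ↥𝔫)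
    (hder : ∀ x y : 𝔰, ⁅x, y⁆ ∈ 𝔫) :
    numIrreducibleFactors (lieCharPoly N 𝔰 b) ≥ (lieWeightSet 𝔰 𝔫).ncard :=
  numIrreducibleFactors_ge_card_weights_general N 𝔰 b 𝔫
end

section
/- There exist two 6-dimensional complex solvable Lie algebras L₁ and L₂ with ordered bases such that their characteristic polynomials coincide, namely Q_{L₁}(z₀, …, z₆) = Q_{L₂}(z₀, …, z₆) = z₀³·(z₀ + z₆)³ (so in particular L₁ and L₂ are spectrally equivalent), while dim [L₁, L₁] = 3 and dim [L₂, L₂] = 4; consequently L₁ and L₂ are not isomorphic as Lie algebras. -/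
/-- A complex solvable Lie algebra together with an ordered basis indexed by `Fin N`. -/
structure SolvableLieAlgWithBasis (N : ℕ) where
  carrier : Type
  [lieRing : LieRing carrier]
  [lieAlgebra : LieAlgebra ℂ carrier]
  solvable : LieAlgebra.IsSolvable carrier
  basis : Module.Basis (Fin N) ℂ carrier

attribute [instance] SolvableLieAlgWithBasis.lieRing SolvableLieAlgWithBasis.lieAlgebra

/-!
Take the almost abelian algebras `L_t = ℂ⁵ ⋊ ℂe`, where `ℂ⁵` is an abelian ideal on which `ad e`
acts by `D_t = 1₃ ⊕ (0 t; 0 0)`, and compare `L_0` with `L_1`. In the basis `(ℂ⁵-basis, e)` every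
`ad x` has zero last row and only `ad e` has a nonzero `ℂ⁵`-block, so
`Q = z₀ · det (z₀ + z₆ D_t) = z₀³ (z₀ + z₆)³` independently of `t`. The derived algebra is
`range D_t`, of dimension `3` for `t = 0` and `4` for `t ≠ 0`, and this dimension is an
isomorphism invariant.
-/

/-- The semidirect product `V ⋊_D R` of the abelian Lie algebra `V` with `R` acting by `D`. -/
def AlmostAbelian {R V : Type*} [CommRing R] [AddCommGroup V] [Module R V]
    (_D : Module.End R V) : Type _ :=
  V × R

namespace AlmostAbelian

section General

variable {R V : Type*} [CommRing R] [AddCommGroup V] [Module R V] {D : Module.End R V}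

instance : AddCommGroup (AlmostAbelian D) := inferInstanceAs (AddCommGroup (V × R))
instance : Module R (AlmostAbelian D) := inferInstanceAs (Module R (V × R))

@[ext] lemma ext {x y : AlmostAbelian D} (h₁ : x.1 = y.1) (h₂ : x.2 = y.2) : x = y :=
  Prod.ext h₁ h₂

@[simp] lemma fst_zero : (0 : AlmostAbelian D).1 = 0 := rfl
@[simp] lemma snd_zero : (0 : AlmostAbelian D).2 = 0 := rfl
@[simp] lemma fst_add (x y : AlmostAbelian D) : (x + y).1 = x.1 + y.1 := rfl
@[simp] lemma snd_add (x y : AlmostAbelian D) : (x + y).2 = x.2 + y.2 := rfl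
@[simp] lemma fst_sub (x y : AlmostAbelian D) : (x - y).1 = x.1 - y.1 := rfl
@[simp] lemma snd_sub (x y : AlmostAbelian D) : (x - y).2 = x.2 - y.2 := rfl
@[simp] lemma fst_smul (c : R) (x : AlmostAbelian D) : (c • x).1 = c • x.1 := rfl
@[simp] lemma snd_smul (c : R) (x : AlmostAbelian D) : (c • x).2 = c • x.2 := rfl

instance : Bracket (AlmostAbelian D) (AlmostAbelian D) where
  bracket x y := ((x.2 • D y.1 - y.2 • D x.1, 0) : V × R)

@[simp] lemma fst_lie (x y : AlmostAbelian D) : ⁅x, y⁆.1 = x.2 • D y.1 - y.2 • D x.1 := rfl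
@[simp] lemma snd_lie (x y : AlmostAbelian D) : ⁅x, y⁆.2 = 0 := rfl

instance : LieRing (AlmostAbelian D) where
  add_lie x y z := by ext <;> simp [add_smul]; abel
  lie_add x y z := by ext <;> simp [smul_add, add_smul]; abel
  lie_self x := by ext <;> simp
  leibniz_lie x y z := by ext <;> simp [smul_sub]; module

instance : LieAlgebra R (AlmostAbelian D) where
  lie_smul c x y := by ext <;> simp [smul_sub, smul_comm c, mul_smul]

variable (D) in
def inl : V →ₗ[R] AlmostAbelian D := LinearMap.inl R V R

variable (D) in
def inr : R →ₗ[R] AlmostAbelian D := LinearMap.inr R V R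

@[simp] lemma fst_inl (v : V) : (inl D v).1 = v := rfl
@[simp] lemma snd_inl (v : V) : (inl D v).2 = 0 := rfl
@[simp] lemma fst_inr (a : R) : (inr D a).1 = 0 := rfl
@[simp] lemma snd_inr (a : R) : (inr D a).2 = a := rfl

lemma lie_inr_inl (a : R) (v : V) : ⁅inr D a, inl D v⁆ = inl D (a • D v) := by
  ext <;> simp

lemma derivedSeries_one_eq_map_range :
    (LieAlgebra.derivedSeries R (AlmostAbelian D) 1 : Submodule R (AlmostAbelian D)) =
      (LinearMap.range D).map (inl D) := by
  rw [LieAlgebra.coe_derivedSeries_one_eq]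
  apply le_antisymm
  · rw [Submodule.span_le]
    rintro _ ⟨x, y, rfl⟩
    exact ⟨D (x.2 • y.1 - y.2 • x.1), ⟨_, rfl⟩, by ext <;> simp⟩
  · rintro _ ⟨_, ⟨v, rfl⟩, rfl⟩
    exact Submodule.subset_span ⟨inr D 1, inl D v, by rw [lie_inr_inl, one_smul]⟩

lemma finrank_derivedSeries_one :
    Module.finrank R (LieAlgebra.derivedSeries R (AlmostAbelian D) 1) =
      Module.finrank R (LinearMap.range D) := by
  change Module.finrank R
    (LieAlgebra.derivedSeries R (AlmostAbelian D) 1 : Submodule R (AlmostAbelian D)) = _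
  rw [derivedSeries_one_eq_map_range]
  exact (Submodule.equivMapOfInjective _ LinearMap.inl_injective _).symm.finrank_eq

instance : LieAlgebra.IsSolvable (AlmostAbelian D) := by
  refine LieAlgebra.IsSolvable.mk (R := R) (k := 2) ?_
  rw [LieAlgebra.derivedSeries_def, LieAlgebra.derivedSeriesOfIdeal_succ,
    LieSubmodule.lie_eq_bot_iff]
  have snd_eq_zero {x : AlmostAbelian D} (hx : x ∈ LieAlgebra.derivedSeries R _ 1) :
      x.2 = 0 := by
    have hx : x ∈ (LinearMap.range D).map (inl D) := by
      rwa [← derivedSeries_one_eq_map_range]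
    obtain ⟨_, -, rfl⟩ := hx
    rfl
  intro x hx y hy
  ext <;> simp [snd_eq_zero hx, snd_eq_zero hy]

variable {n : ℕ}

variable (D) in
def equivProd : AlmostAbelian D ≃ₗ[R] V × R := LinearEquiv.refl R (V × R)

variable (D) in
noncomputable def basis (b : Module.Basis (Fin n) R V) :
    Module.Basis (Fin (n + 1)) R (AlmostAbelian D) :=
  ((b.prod (Module.Basis.singleton (Fin 1) R)).reindex finSumFinEquiv).map (equivProd D).symm

variable (b : Module.Basis (Fin n) R V)

@[simp] lemma basis_castSucc (i : Fin n) : basis D b i.castSucc = inl D (b i) := by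
  ext <;> simp [basis] <;> rfl

@[simp] lemma basis_last : basis D b (Fin.last n) = inr D 1 := by
  ext <;> simp [basis] <;> rfl

@[simp] lemma basis_repr_castSucc (x : AlmostAbelian D) (i : Fin n) :
    (basis D b).repr x i.castSucc = b.repr x.1 i := by
  simp [basis]; rfl

@[simp] lemma basis_repr_last (x : AlmostAbelian D) : (basis D b).repr x (Fin.last n) = x.2 := by
  simp [basis]; rfl

lemma toMatrix_ad_last (x : AlmostAbelian D) (j : Fin (n + 1)) :
    LinearMap.toMatrix (basis D b) (basis D b) (LieAlgebra.ad R _ x) (Fin.last n) j = 0 := by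
  simp [LinearMap.toMatrix_apply]

lemma toMatrix_ad_castSucc_castSucc (x : AlmostAbelian D) (i j : Fin n) :
    LinearMap.toMatrix (basis D b) (basis D b) (LieAlgebra.ad R _ x) i.castSucc j.castSucc =
      x.2 * LinearMap.toMatrix b b D i j := by
  simp [LinearMap.toMatrix_apply]

end General

open MvPolynomial in
theorem lieCharPoly_basis {V : Type} [AddCommGroup V] [Module ℂ V] {n : ℕ}
    (D : Module.End ℂ V) (b : Module.Basis (Fin n) ℂ V) :
    lieCharPoly (n + 1) (AlmostAbelian D) (basis D b) =
      (X 0 : MvPolynomial (Fin (n + 2)) ℂ) *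
        Matrix.det ((X 0 : MvPolynomial (Fin (n + 2)) ℂ) • 1 +
          (X (Fin.last (n + 1)) : MvPolynomial (Fin (n + 2)) ℂ) •
            (LinearMap.toMatrix b b D).map C) := by
  rw [lieCharPoly]
  set M := (X 0 : MvPolynomial (Fin (n + 2)) ℂ) •
      (1 : Matrix (Fin (n + 1)) (Fin (n + 1)) (MvPolynomial (Fin (n + 2)) ℂ)) +
    ∑ k : Fin (n + 1), (X k.succ : MvPolynomial (Fin (n + 2)) ℂ) •
      ((LinearMap.toMatrix (basis D b) (basis D b)
        (LieAlgebra.ad ℂ (AlmostAbelian D) (basis D b k))).map C)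
  have last_row (j : Fin (n + 1)) : M (Fin.last n) j = if Fin.last n = j then X 0 else 0 := by
    simp [M, Matrix.sum_apply, Matrix.one_apply, toMatrix_ad_last]
  have submatrix_castSucc : M.submatrix Fin.castSucc Fin.castSucc =
      (X 0 : MvPolynomial (Fin (n + 2)) ℂ) • 1 +
        (X (Fin.last (n + 1)) : MvPolynomial (Fin (n + 2)) ℂ) •
          (LinearMap.toMatrix b b D).map C := by
    ext i j
    simp [M, Matrix.sum_apply, Matrix.one_apply, Fin.sum_univ_castSucc,
      toMatrix_ad_castSucc_castSucc]
  rw [Matrix.det_succ_row _ (Fin.last n), Fin.sum_univ_castSucc]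
  simp [last_row, submatrix_castSucc, (Fin.castSucc_ne_last _).symm]

end AlmostAbelian

theorem LieEquiv.finrank_derivedSeries_eq {R L L' : Type*} [CommRing R] [LieRing L]
    [LieAlgebra R L] [LieRing L'] [LieAlgebra R L'] (e : L ≃ₗ⁅R⁆ L') (k : ℕ) :
    Module.finrank R (LieAlgebra.derivedSeries R L k) =
      Module.finrank R (LieAlgebra.derivedSeries R L' k) := by
  rw [← LieIdeal.derivedSeries_map_eq k e.surjective]
  change _ = Module.finrank R
    (LieSubmodule.toSubmodule ((LieAlgebra.derivedSeries R L k).map e.toLieHom))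
  rw [LieIdeal.coe_map_of_surjective e.surjective]
  exact (e.toLinearEquiv.finrank_map_eq _).symm

theorem Matrix.det_smul_one_add_smul_map_of_isUpperTriangular {n R S : Type*} [Fintype n]
    [LinearOrder n] [CommRing R] [CommRing S] {M : Matrix n n R} (hM : M.IsUpperTriangular)
    (f : R →+* S) (a c : S) :
    (a • 1 + c • M.map f).det = ∏ i, (a + c * f (M i i)) := by
  rw [Matrix.det_of_isUpperTriangular]
  · simp
  · intro i j hij
    have h1 : (1 : Matrix n n S) i j = 0 := Matrix.one_apply_ne hij.ne'
    simp [h1, hM hij]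

theorem Module.Basis.finrank_span_comp {K V ι κ : Type*} [Field K] [AddCommGroup V] [Module K V]
    [Fintype κ] (b : Module.Basis ι K V) {f : κ → ι} (hf : Function.Injective f) :
    Module.finrank K (Submodule.span K (Set.range (b ∘ f))) = Fintype.card κ :=
  finrank_span_eq_card (b.linearIndependent.comp f hf)

section Example

variable {K : Type*} [Field K]

def exampleMatrix (t : K) : Matrix (Fin 5) (Fin 5) K :=
  !![1, 0, 0, 0, 0; 0, 1, 0, 0, 0; 0, 0, 1, 0, 0; 0, 0, 0, 0, t; 0, 0, 0, 0, 0]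

lemma exampleMatrix_isUpperTriangular (t : K) : (exampleMatrix t).IsUpperTriangular := by
  intro i j hij
  fin_cases i <;> fin_cases j <;> simp_all [exampleMatrix]

lemma finrank_range_exampleMatrix_zero :
    Module.finrank K (LinearMap.range (Matrix.toLin' (exampleMatrix (0 : K)))) = 3 := by
  have range_eq : LinearMap.range (Matrix.toLin' (exampleMatrix (0 : K))) =
      Submodule.span K (Set.range (Pi.basisFun K (Fin 5) ∘ ![0, 1, 2])) := by
    apply le_antisymm
    · rintro _ ⟨v, rfl⟩
      rw [Submodule.mem_span_range_iff_exists_fun]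
      refine ⟨![v 0, v 1, v 2], ?_⟩
      ext i
      fin_cases i <;> simp [exampleMatrix, Fin.sum_univ_succ, Matrix.mulVec, dotProduct]
    · rw [Submodule.span_le]
      rintro _ ⟨i, rfl⟩
      refine ⟨Pi.basisFun K _ (![0, 1, 2] i), ?_⟩
      ext j
      fin_cases i <;> fin_cases j <;>
        simp [exampleMatrix, Fin.sum_univ_succ, Matrix.mulVec, dotProduct]
  rw [range_eq, Module.Basis.finrank_span_comp _ (by decide), Fintype.card_fin]

lemma finrank_range_exampleMatrix_of_ne_zero {t : K} (ht : t ≠ 0) :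
    Module.finrank K (LinearMap.range (Matrix.toLin' (exampleMatrix t))) = 4 := by
  have range_eq : LinearMap.range (Matrix.toLin' (exampleMatrix t)) =
      Submodule.span K (Set.range (Pi.basisFun K (Fin 5) ∘ ![0, 1, 2, 3])) := by
    apply le_antisymm
    · rintro _ ⟨v, rfl⟩
      rw [Submodule.mem_span_range_iff_exists_fun]
      refine ⟨![v 0, v 1, v 2, t * v 4], ?_⟩
      ext i
      fin_cases i <;> simp [exampleMatrix, Fin.sum_univ_succ, Matrix.mulVec, dotProduct]
    · rw [Submodule.span_le]
      rintro _ ⟨i, rfl⟩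
      refine ⟨![Pi.single 0 1, Pi.single 1 1, Pi.single 2 1, Pi.single 4 t⁻¹] i, ?_⟩
      ext j
      fin_cases i <;> fin_cases j <;>
        simp [exampleMatrix, Fin.sum_univ_succ, Matrix.mulVec, dotProduct, ht]
  rw [range_eq, Module.Basis.finrank_span_comp _ (by decide), Fintype.card_fin]

end Example

noncomputable def exampleAlgebra (t : ℂ) : SolvableLieAlgWithBasis 6 where
  carrier := AlmostAbelian (Matrix.toLin' (exampleMatrix t))
  solvable := inferInstance
  basis := AlmostAbelian.basis _ (Pi.basisFun ℂ (Fin 5))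

open MvPolynomial in
lemma lieCharPoly_exampleAlgebra (t : ℂ) :
    lieCharPoly 6 (exampleAlgebra t).carrier (exampleAlgebra t).basis =
      (X 0 : MvPolynomial (Fin 7) ℂ) ^ 3 * (X 0 + X 6) ^ 3 := by
  rw [exampleAlgebra, AlmostAbelian.lieCharPoly_basis, LinearMap.toMatrix_eq_toMatrix',
    LinearMap.toMatrix'_toLin',
    Matrix.det_smul_one_add_smul_map_of_isUpperTriangular (exampleMatrix_isUpperTriangular t),
    Fin.prod_univ_five]
  simp [exampleMatrix]
  ring

/-- There exist two 6-dimensional complex solvable Lie algebras `L₁`, `L₂`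
with ordered bases whose characteristic polynomials are both `z₀³ (z₀ + z₆)³` (so `L₁` and `L₂`
are spectrally equivalent), while `dim [L₁, L₁] = 3` and `dim [L₂, L₂] = 4`; consequently `L₁`
and `L₂` are not isomorphic as Lie algebras. -/
theorem exists_spectrally_equivalent_not_isomorphic :
    ∃ A₁ A₂ : SolvableLieAlgWithBasis 6,
      lieCharPoly 6 A₁.carrier A₁.basis =
        (MvPolynomial.X 0 : MvPolynomial (Fin 7) ℂ) ^ 3 *
          (MvPolynomial.X 0 + MvPolynomial.X 6) ^ 3 ∧
      lieCharPoly 6 A₂.carrier A₂.basis =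
        (MvPolynomial.X 0 : MvPolynomial (Fin 7) ℂ) ^ 3 *
          (MvPolynomial.X 0 + MvPolynomial.X 6) ^ 3 ∧
      Module.finrank ℂ ↥(LieAlgebra.derivedSeries ℂ A₁.carrier 1) = 3 ∧
      Module.finrank ℂ ↥(LieAlgebra.derivedSeries ℂ A₂.carrier 1) = 4 ∧
      IsEmpty (A₁.carrier ≃ₗ⁅ℂ⁆ A₂.carrier) := by
  have finrank₁ :
      Module.finrank ℂ (LieAlgebra.derivedSeries ℂ (exampleAlgebra 0).carrier 1) = 3 :=
    AlmostAbelian.finrank_derivedSeries_one.trans finrank_range_exampleMatrix_zero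
  have finrank₂ :
      Module.finrank ℂ (LieAlgebra.derivedSeries ℂ (exampleAlgebra 1).carrier 1) = 4 :=
    AlmostAbelian.finrank_derivedSeries_one.trans
      (finrank_range_exampleMatrix_of_ne_zero one_ne_zero)
  refine ⟨exampleAlgebra 0, exampleAlgebra 1, lieCharPoly_exampleAlgebra 0,
    lieCharPoly_exampleAlgebra 1, finrank₁, finrank₂, ⟨fun e => ?_⟩⟩
  have := e.finrank_derivedSeries_eq 1
  omega
end

section
/- Let 𝔰 be a solvable complex Lie algebra in the canonical form for a Heisenberg nilradical 𝔥(m) with f-dimensional extension. Then its characteristic polynomial with respect to the canonical basis is Q_𝔰(z) = z₀^f · (z₀ + Σ_{α=1}^{f} 2a_α·z_{f_α}) · det(z₀·I_{2m} + Σ_{α=1}^{f} z_{f_α}·(a_α·I_{2m} + X_α)). -/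
/-- The index of the central element `h` in the canonical basis
`(h, p₁, …, p_m, q₁, …, q_m, f₁, …, f_f)`. -/
def idxH (m f : ℕ) : Fin (2 * m + 1 + f) := ⟨0, by omega⟩

/-- The index of `p_i` in the canonical basis. -/
def idxP (m f : ℕ) (i : Fin m) : Fin (2 * m + 1 + f) := ⟨1 + i.val, by have := i.isLt; omega⟩

/-- The index of `q_i` in the canonical basis. -/
def idxQ (m f : ℕ) (i : Fin m) : Fin (2 * m + 1 + f) :=
  ⟨1 + m + i.val, by have := i.isLt; omega⟩

/-- The index of `ξ_i` in the canonical basis, where `ξ = (p₁, …, p_m, q₁, …, q_m)`. -/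
def idxXi (m f : ℕ) (i : Fin (2 * m)) : Fin (2 * m + 1 + f) :=
  ⟨1 + i.val, by have := i.isLt; omega⟩

/-- The index of the extension element `f_α` in the canonical basis. -/
def idxF (m f : ℕ) (α : Fin f) : Fin (2 * m + 1 + f) :=
  ⟨2 * m + 1 + α.val, by have := α.isLt; omega⟩

/-- The canonical symplectic structure matrix `J` on `ℂ^{2m}` (with respect to the ordering
`(p₁, …, p_m, q₁, …, q_m)`), so that `𝔰𝔭(2m, ℂ) = {X | Xᵀ J + J X = 0}`. -/
def symplJ (m : ℕ) : Matrix (Fin (2 * m)) (Fin (2 * m)) ℂ :=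
  Matrix.of fun i j =>
    if i.val < m ∧ j.val = i.val + m then 1
    else if j.val < m ∧ i.val = j.val + m then -1 else 0

/-! In the basis order `(h | ξ | f)` the flag `ℂh ⊂ ℂh ⊕ span ξ ⊂ 𝔰` is stable under every
`ad x`, so the characteristic matrix is block upper triangular. On `ℂh` only the `ad f_α` act,
by `2 a_α`; on `span ξ` modulo `h` only the `ad f_α` act, by `a_α I + X_α`, because `h` is
central in the nilradical and `[ξ, ξ] ⊆ ℂh`; and on `𝔰` modulo `ℂh ⊕ span ξ` every `ad x`
vanishes. The three diagonal blocks give the three factors. -/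

open MvPolynomial (C)

noncomputable def lieCharMatrix (N : ℕ) (L : Type) [LieRing L] [LieAlgebra ℂ L]
    (b : Module.Basis (Fin N) ℂ L) :
    Matrix (Fin N) (Fin N) (MvPolynomial (Fin (N + 1)) ℂ) :=
  (MvPolynomial.X 0 : MvPolynomial (Fin (N + 1)) ℂ) • 1 +
    ∑ k : Fin N, (MvPolynomial.X k.succ : MvPolynomial (Fin (N + 1)) ℂ) •
      (LinearMap.toMatrix b b (LieAlgebra.ad ℂ L (b k))).map C

theorem lieCharPoly_eq_det_lieCharMatrix (N : ℕ) (L : Type) [LieRing L] [LieAlgebra ℂ L]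
    (b : Module.Basis (Fin N) ℂ L) : lieCharPoly N L b = (lieCharMatrix N L b).det :=
  rfl

theorem lieCharMatrix_apply (N : ℕ) (L : Type) [LieRing L] [LieAlgebra ℂ L]
    (b : Module.Basis (Fin N) ℂ L) (i j : Fin N) :
    lieCharMatrix N L b i j =
      MvPolynomial.X 0 * (1 : Matrix (Fin N) (Fin N) (MvPolynomial (Fin (N + 1)) ℂ)) i j +
        ∑ k, MvPolynomial.X k.succ * C (b.repr ⁅b k, b j⁆ i) := by
  simp [lieCharMatrix, Matrix.sum_apply, LinearMap.toMatrix_apply]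

theorem Matrix.det_eq_det_toBlocks₁₁_mul_det_toBlocks₂₂ {R m n : Type*} [CommRing R]
    [Fintype m] [Fintype n] [DecidableEq m] [DecidableEq n] (M : Matrix (m ⊕ n) (m ⊕ n) R)
    (h : M.toBlocks₂₁ = 0) : M.det = M.toBlocks₁₁.det * M.toBlocks₂₂.det := by
  conv_lhs => rw [← M.fromBlocks_toBlocks, h]
  exact det_fromBlocks_zero₂₁ _ _ _

theorem Module.Basis.repr_eq_zero_of_mem_span_singleton {ι R M : Type*} [Semiring R]
    [AddCommMonoid M] [Module R M] (b : Module.Basis ι R M) {x : M} {i j : ι}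
    (hx : x ∈ R ∙ b j) (hij : i ≠ j) : b.repr x i = 0 := by
  obtain ⟨c, rfl⟩ := Submodule.mem_span_singleton.mp hx
  simp [hij.symm]

def heisenbergIndexEquiv (m f : ℕ) : Fin 1 ⊕ (Fin (2 * m) ⊕ Fin f) ≃ Fin (2 * m + 1 + f) :=
  (Equiv.sumAssoc _ _ _).symm.trans <|
    (Equiv.sumCongr (finSumFinEquiv.trans (finCongr (by omega))) (Equiv.refl _)).trans
      finSumFinEquiv

noncomputable def heisenbergXiBlock (m f : ℕ) (a : Fin f → ℂ)
    (X : Fin f → Matrix (Fin (2 * m)) (Fin (2 * m)) ℂ) :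
    Matrix (Fin (2 * m)) (Fin (2 * m)) (MvPolynomial (Fin (2 * m + 1 + f + 1)) ℂ) :=
  (MvPolynomial.X 0 : MvPolynomial (Fin (2 * m + 1 + f + 1)) ℂ) • 1 +
    ∑ α, (MvPolynomial.X (idxF m f α).succ : MvPolynomial (Fin (2 * m + 1 + f + 1)) ℂ) •
      (a α • (1 : Matrix (Fin (2 * m)) (Fin (2 * m)) ℂ) + X α).map C

section Indices

variable (m f : ℕ)

@[simp] theorem heisenbergIndexEquiv_inl (x : Fin 1) :
    heisenbergIndexEquiv m f (Sum.inl x) = idxH m f := by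
  ext; simp [heisenbergIndexEquiv, idxH, Fin.fin_one_eq_zero x]

@[simp] theorem heisenbergIndexEquiv_inr_inl (i : Fin (2 * m)) :
    heisenbergIndexEquiv m f (Sum.inr (Sum.inl i)) = idxXi m f i := by
  ext; simp [heisenbergIndexEquiv, idxXi, add_comm]

@[simp] theorem heisenbergIndexEquiv_inr_inr (α : Fin f) :
    heisenbergIndexEquiv m f (Sum.inr (Sum.inr α)) = idxF m f α := by
  ext; simp [heisenbergIndexEquiv, idxF]

theorem sum_fin_heisenberg {M : Type*} [AddCommMonoid M] (g : Fin (2 * m + 1 + f) → M) :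
    ∑ k, g k = g (idxH m f) + ∑ i, g (idxXi m f i) + ∑ α, g (idxF m f α) := by
  rw [← (heisenbergIndexEquiv m f).sum_comp]
  simp [Fintype.sum_sum_type, add_assoc]

variable {m f}

@[simp] theorem idxXi_ne_idxH (i : Fin (2 * m)) : idxXi m f i ≠ idxH m f := by
  simp [idxXi, idxH, Fin.ext_iff]

@[simp] theorem idxF_ne_idxH (α : Fin f) : idxF m f α ≠ idxH m f := by
  simp [idxF, idxH, Fin.ext_iff]

@[simp] theorem idxF_ne_idxXi (α : Fin f) (i : Fin (2 * m)) : idxF m f α ≠ idxXi m f i :=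
  Fin.ne_of_val_ne (by simp only [idxF, idxXi]; omega)

@[simp] theorem idxXi_inj {i j : Fin (2 * m)} : idxXi m f i = idxXi m f j ↔ i = j := by
  simp [idxXi, Fin.ext_iff]

@[simp] theorem idxF_inj {α β : Fin f} : idxF m f α = idxF m f β ↔ α = β := by
  simp [idxF, Fin.ext_iff]

theorem idxXi_eq_idxP_or_idxQ (i : Fin (2 * m)) :
    (∃ i', idxXi m f i = idxP m f i') ∨ ∃ i', idxXi m f i = idxQ m f i' := by
  rcases Nat.lt_or_ge i.val m with hi | hi
  · exact .inl ⟨⟨i, hi⟩, rfl⟩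
  · exact .inr ⟨⟨i - m, by omega⟩, Fin.ext (by simp only [idxXi, idxQ]; omega)⟩

end Indices

section Heisenberg

variable {m f : ℕ} {𝔰 : Type} [LieRing 𝔰] [LieAlgebra ℂ 𝔰]
  (b : Module.Basis (Fin (2 * m + 1 + f)) ℂ 𝔰)

theorem lie_idxH_idxXi (hhp : ∀ i : Fin m, ⁅b (idxH m f), b (idxP m f i)⁆ = 0)
    (hhq : ∀ i : Fin m, ⁅b (idxH m f), b (idxQ m f i)⁆ = 0) (i : Fin (2 * m)) :
    ⁅b (idxH m f), b (idxXi m f i)⁆ = 0 := by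
  rcases idxXi_eq_idxP_or_idxQ i with ⟨i', hi⟩ | ⟨i', hi⟩ <;> rw [hi]
  exacts [hhp i', hhq i']

theorem lie_idxXi_idxXi_mem_span
    (hpq : ∀ i j : Fin m,
      ⁅b (idxP m f i), b (idxQ m f j)⁆ = if i = j then b (idxH m f) else 0)
    (hpp : ∀ i j : Fin m, ⁅b (idxP m f i), b (idxP m f j)⁆ = 0)
    (hqq : ∀ i j : Fin m, ⁅b (idxQ m f i), b (idxQ m f j)⁆ = 0) (i j : Fin (2 * m)) :
    ⁅b (idxXi m f i), b (idxXi m f j)⁆ ∈ ℂ ∙ b (idxH m f) := by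
  have hpq_mem : ∀ i j, ⁅b (idxP m f i), b (idxQ m f j)⁆ ∈ ℂ ∙ b (idxH m f) := fun i j => by
    rw [hpq]
    split_ifs
    exacts [Submodule.mem_span_singleton_self _, zero_mem _]
  rcases idxXi_eq_idxP_or_idxQ i with ⟨i', hi⟩ | ⟨i', hi⟩ <;>
    rcases idxXi_eq_idxP_or_idxQ j with ⟨j', hj⟩ | ⟨j', hj⟩ <;> rw [hi, hj]
  · exact hpp i' j' ▸ zero_mem _
  · exact hpq_mem i' j'
  · rw [← lie_skew]
    exact neg_mem (hpq_mem j' i')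
  · exact hqq i' j' ▸ zero_mem _

variable (a : Fin f → ℂ) (X : Fin f → Matrix (Fin (2 * m)) (Fin (2 * m)) ℂ)

theorem lieCharMatrix_idxH_idxH (hhξ : ∀ i, ⁅b (idxH m f), b (idxXi m f i)⁆ = 0)
    (hfh : ∀ α : Fin f, ⁅b (idxF m f α), b (idxH m f)⁆ = (2 * a α) • b (idxH m f)) :
    lieCharMatrix _ 𝔰 b (idxH m f) (idxH m f) =
      MvPolynomial.X 0 + ∑ α, C (2 * a α) * MvPolynomial.X (idxF m f α).succ := by
  rw [lieCharMatrix_apply, sum_fin_heisenberg]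
  simp [← lie_skew (b (idxXi m f _)), hhξ, hfh, mul_comm]

theorem lieCharMatrix_apply_idxH_of_ne (hhξ : ∀ i, ⁅b (idxH m f), b (idxXi m f i)⁆ = 0)
    (hfh : ∀ α : Fin f, ⁅b (idxF m f α), b (idxH m f)⁆ = (2 * a α) • b (idxH m f))
    {i : Fin (2 * m + 1 + f)} (hi : i ≠ idxH m f) :
    lieCharMatrix _ 𝔰 b i (idxH m f) = 0 := by
  rw [lieCharMatrix_apply, sum_fin_heisenberg]
  simp [← lie_skew (b (idxXi m f _)), hhξ, hfh, hi]

theorem lieCharMatrix_idxXi_idxXi (hhξ : ∀ i, ⁅b (idxH m f), b (idxXi m f i)⁆ = 0)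
    (hξξ : ∀ i j, ⁅b (idxXi m f i), b (idxXi m f j)⁆ ∈ ℂ ∙ b (idxH m f))
    (hfxi : ∀ (α : Fin f) (i : Fin (2 * m)),
      ⁅b (idxF m f α), b (idxXi m f i)⁆ =
        ∑ j : Fin (2 * m),
          ((a α • (1 : Matrix (Fin (2 * m)) (Fin (2 * m)) ℂ) + X α) j i) • b (idxXi m f j))
    (i j : Fin (2 * m)) :
    lieCharMatrix _ 𝔰 b (idxXi m f i) (idxXi m f j) = heisenbergXiBlock m f a X i j := by
  rw [lieCharMatrix_apply, sum_fin_heisenberg]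
  simp [heisenbergXiBlock, hhξ, hfxi, Matrix.sum_apply, Matrix.one_apply, Finsupp.single_apply,
    apply_ite C, Finset.sum_add_distrib, b.repr_eq_zero_of_mem_span_singleton (hξξ _ j)]

theorem lieCharMatrix_idxF_idxXi (hhξ : ∀ i, ⁅b (idxH m f), b (idxXi m f i)⁆ = 0)
    (hξξ : ∀ i j, ⁅b (idxXi m f i), b (idxXi m f j)⁆ ∈ ℂ ∙ b (idxH m f))
    (hfxi : ∀ (α : Fin f) (i : Fin (2 * m)),
      ⁅b (idxF m f α), b (idxXi m f i)⁆ =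
        ∑ j : Fin (2 * m),
          ((a α • (1 : Matrix (Fin (2 * m)) (Fin (2 * m)) ℂ) + X α) j i) • b (idxXi m f j))
    (γ : Fin f) (j : Fin (2 * m)) :
    lieCharMatrix _ 𝔰 b (idxF m f γ) (idxXi m f j) = 0 := by
  rw [lieCharMatrix_apply, sum_fin_heisenberg]
  simp [hhξ, hfxi, b.repr_eq_zero_of_mem_span_singleton (hξξ _ j)]

theorem lieCharMatrix_idxF_idxF (r : Fin f → Fin f → ℂ)
    (hfh : ∀ α : Fin f, ⁅b (idxF m f α), b (idxH m f)⁆ = (2 * a α) • b (idxH m f))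
    (hfxi : ∀ (α : Fin f) (i : Fin (2 * m)),
      ⁅b (idxF m f α), b (idxXi m f i)⁆ =
        ∑ j : Fin (2 * m),
          ((a α • (1 : Matrix (Fin (2 * m)) (Fin (2 * m)) ℂ) + X α) j i) • b (idxXi m f j))
    (hff : ∀ α β : Fin f, ⁅b (idxF m f α), b (idxF m f β)⁆ = r α β • b (idxH m f))
    (γ β : Fin f) :
    lieCharMatrix _ 𝔰 b (idxF m f γ) (idxF m f β) =
      if γ = β then MvPolynomial.X 0 else 0 := by
  rw [lieCharMatrix_apply, sum_fin_heisenberg]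
  simp [← lie_skew (b (idxH m f)), ← lie_skew (b (idxXi m f _)), hfh, hfxi, hff, Matrix.one_apply]

end Heisenberg

theorem heisenberg_lieCharPoly_eq_general
    (m f : ℕ)
    (𝔰 : Type) [LieRing 𝔰] [LieAlgebra ℂ 𝔰]
    (b : Module.Basis (Fin (2 * m + 1 + f)) ℂ 𝔰)
    (a : Fin f → ℂ) (X : Fin f → Matrix (Fin (2 * m)) (Fin (2 * m)) ℂ)
    (r : Fin f → Fin f → ℂ)
    (hpq : ∀ i j : Fin m,
      ⁅b (idxP m f i), b (idxQ m f j)⁆ = if i = j then b (idxH m f) else 0)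
    (hpp : ∀ i j : Fin m, ⁅b (idxP m f i), b (idxP m f j)⁆ = 0)
    (hqq : ∀ i j : Fin m, ⁅b (idxQ m f i), b (idxQ m f j)⁆ = 0)
    (hhp : ∀ i : Fin m, ⁅b (idxH m f), b (idxP m f i)⁆ = 0)
    (hhq : ∀ i : Fin m, ⁅b (idxH m f), b (idxQ m f i)⁆ = 0)
    (hfh : ∀ α : Fin f, ⁅b (idxF m f α), b (idxH m f)⁆ = (2 * a α) • b (idxH m f))
    (hfxi : ∀ (α : Fin f) (i : Fin (2 * m)),
      ⁅b (idxF m f α), b (idxXi m f i)⁆ =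
        ∑ j : Fin (2 * m),
          ((a α • (1 : Matrix (Fin (2 * m)) (Fin (2 * m)) ℂ) + X α) j i) • b (idxXi m f j))
    (hff : ∀ α β : Fin f, ⁅b (idxF m f α), b (idxF m f β)⁆ = r α β • b (idxH m f)) :
    lieCharPoly (2 * m + 1 + f) 𝔰 b =
      (MvPolynomial.X 0 : MvPolynomial (Fin (2 * m + 1 + f + 1)) ℂ) ^ f *
        (MvPolynomial.X 0 +
          ∑ α : Fin f, MvPolynomial.C (2 * a α) * MvPolynomial.X (idxF m f α).succ) *
        Matrix.det
          ((MvPolynomial.X 0 : MvPolynomial (Fin (2 * m + 1 + f + 1)) ℂ) •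
              (1 : Matrix (Fin (2 * m)) (Fin (2 * m)) (MvPolynomial (Fin (2 * m + 1 + f + 1)) ℂ)) +
            ∑ α : Fin f,
              (MvPolynomial.X (idxF m f α).succ : MvPolynomial (Fin (2 * m + 1 + f + 1)) ℂ) •
                ((a α • (1 : Matrix (Fin (2 * m)) (Fin (2 * m)) ℂ) + X α).map
                  (MvPolynomial.C))) := by
  have hhξ := lie_idxH_idxXi b hhp hhq
  have hξξ := lie_idxXi_idxXi_mem_span b hpq hpp hqq
  set M := (lieCharMatrix _ 𝔰 b).reindex (heisenbergIndexEquiv m f).symm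
    (heisenbergIndexEquiv m f).symm
  have hM₂₁ : M.toBlocks₂₁ = 0 := Matrix.ext fun s x => by
    simpa [M, Matrix.toBlocks₂₁] using lieCharMatrix_apply_idxH_of_ne b a hhξ hfh <| by
      simpa using (heisenbergIndexEquiv m f).injective.ne (Sum.inr_ne_inl (a := x) (b := s))
  have hM₂₂₂₁ : M.toBlocks₂₂.toBlocks₂₁ = 0 := Matrix.ext fun γ j => by
    simp [M, Matrix.toBlocks₂₂, Matrix.toBlocks₂₁, lieCharMatrix_idxF_idxXi b a X hhξ hξξ hfxi]
  have hM₁₁ : M.toBlocks₁₁.det =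
      MvPolynomial.X 0 + ∑ α, C (2 * a α) * MvPolynomial.X (idxF m f α).succ := by
    simp [M, Matrix.det_unique, Matrix.toBlocks₁₁, lieCharMatrix_idxH_idxH b a hhξ hfh]
  have hM₂₂₁₁ : M.toBlocks₂₂.toBlocks₁₁ = heisenbergXiBlock m f a X := Matrix.ext fun i j => by
    simp [M, Matrix.toBlocks₂₂, Matrix.toBlocks₁₁, lieCharMatrix_idxXi_idxXi b a X hhξ hξξ hfxi]
  have hM₂₂₂₂ : M.toBlocks₂₂.toBlocks₂₂ =
      (MvPolynomial.X 0 : MvPolynomial (Fin (2 * m + 1 + f + 1)) ℂ) • 1 :=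
    Matrix.ext fun γ β => by
      simp [M, Matrix.toBlocks₂₂, Matrix.one_apply, lieCharMatrix_idxF_idxF b a X r hfh hfxi hff]
  rw [lieCharPoly_eq_det_lieCharMatrix,
    ← Matrix.det_reindex_self (heisenbergIndexEquiv m f).symm,
    M.det_eq_det_toBlocks₁₁_mul_det_toBlocks₂₂ hM₂₁,
    M.toBlocks₂₂.det_eq_det_toBlocks₁₁_mul_det_toBlocks₂₂ hM₂₂₂₁, hM₁₁, hM₂₂₁₁, hM₂₂₂₂,
    Matrix.det_smul, Matrix.det_one, Fintype.card_fin, heisenbergXiBlock]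
  ring

/-- For a solvable complex Lie algebra `𝔰` in the canonical form for a
Heisenberg nilradical `𝔥(m)` with `f`-dimensional extension, the characteristic polynomial is
`Q_𝔰 = z₀^f · (z₀ + Σ_α 2 a_α z_{f_α}) · det (z₀ I_{2m} + Σ_α z_{f_α} (a_α I_{2m} + X_α))`. -/
theorem heisenberg_lieCharPoly_eq
    (m f : ℕ) (hm : 1 ≤ m) (hf : 1 ≤ f)
    (𝔰 : Type) [LieRing 𝔰] [LieAlgebra ℂ 𝔰] [LieAlgebra.IsSolvable 𝔰]
    (b : Module.Basis (Fin (2 * m + 1 + f)) ℂ 𝔰)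
    (a : Fin f → ℂ) (X : Fin f → Matrix (Fin (2 * m)) (Fin (2 * m)) ℂ)
    (r : Fin f → Fin f → ℂ)
    (hpq : ∀ i j : Fin m,
      ⁅b (idxP m f i), b (idxQ m f j)⁆ = if i = j then b (idxH m f) else 0)
    (hpp : ∀ i j : Fin m, ⁅b (idxP m f i), b (idxP m f j)⁆ = 0)
    (hqq : ∀ i j : Fin m, ⁅b (idxQ m f i), b (idxQ m f j)⁆ = 0)
    (hhp : ∀ i : Fin m, ⁅b (idxH m f), b (idxP m f i)⁆ = 0)
    (hhq : ∀ i : Fin m, ⁅b (idxH m f), b (idxQ m f i)⁆ = 0)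
    (hfh : ∀ α : Fin f, ⁅b (idxF m f α), b (idxH m f)⁆ = (2 * a α) • b (idxH m f))
    (hfxi : ∀ (α : Fin f) (i : Fin (2 * m)),
      ⁅b (idxF m f α), b (idxXi m f i)⁆ =
        ∑ j : Fin (2 * m),
          ((a α • (1 : Matrix (Fin (2 * m)) (Fin (2 * m)) ℂ) + X α) j i) • b (idxXi m f j))
    (hff : ∀ α β : Fin f, ⁅b (idxF m f α), b (idxF m f β)⁆ = r α β • b (idxH m f))
    (hskew : ∀ α β : Fin f, r β α = - r α β)
    (hsp : ∀ α : Fin f, (X α).transpose * symplJ m + symplJ m * X α = 0)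
    (hcomm : ∀ α β : Fin f, X α * X β = X β * X α) :
    lieCharPoly (2 * m + 1 + f) 𝔰 b =
      (MvPolynomial.X 0 : MvPolynomial (Fin (2 * m + 1 + f + 1)) ℂ) ^ f *
        (MvPolynomial.X 0 +
          ∑ α : Fin f, MvPolynomial.C (2 * a α) * MvPolynomial.X (idxF m f α).succ) *
        Matrix.det
          ((MvPolynomial.X 0 : MvPolynomial (Fin (2 * m + 1 + f + 1)) ℂ) •
              (1 : Matrix (Fin (2 * m)) (Fin (2 * m)) (MvPolynomial (Fin (2 * m + 1 + f + 1)) ℂ)) +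
            ∑ α : Fin f,
              (MvPolynomial.X (idxF m f α).succ : MvPolynomial (Fin (2 * m + 1 + f + 1)) ℂ) •
                ((a α • (1 : Matrix (Fin (2 * m)) (Fin (2 * m)) ℂ) + X α).map
                  (MvPolynomial.C))) :=
  heisenberg_lieCharPoly_eq_general m f 𝔰 b a X r hpq hpp hqq hhp hhq hfh hfxi hff
end

section
/- For b ∈ ℂ define Q_b := z₀³·(z₀ + z₆)²·(z₀ − b·z₆ + z₇)·(z₀ + (b+1)·z₆ − z₇) ∈ ℂ[z₀, z₁, …, z₇]. Then for all b, b' ∈ ℂ there exists an invertible matrix B ∈ GL₇(ℂ) such that Q_{b'}(z₀, (z₁, …, z₇)·B) = Q_b(z₀, z₁, …, z₇); explicitly, the matrix B equal to the identity matrix except for the entry B_{6,7} = b' − b (so that the substitution sends z₇ to z₇ + (b'−b)·z₆ and fixes all other variables) satisfies this identity. Consequently all members of this one-parameter family are spectrally equivalent, i.e. the family forms a single spectral equivalence class. -/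
/-- The characteristic polynomial
`Q_b = z₀³ (z₀ + z₆)² (z₀ − b z₆ + z₇)(z₀ + (b+1) z₆ − z₇)` of the one-parameter family
`𝔰_{5,2}^{1,1,b}` of 7-dimensional solvable complex Lie algebras with Heisenberg nilradical
`𝔥(2)`, in the variables `z₀, z₁, …, z₇`. -/
noncomputable def Q52 (b : ℂ) : MvPolynomial (Fin 8) ℂ :=
  MvPolynomial.X 0 ^ 3 * (MvPolynomial.X 0 + MvPolynomial.X 6) ^ 2 *
    (MvPolynomial.X 0 - MvPolynomial.C b * MvPolynomial.X 6 + MvPolynomial.X 7) *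
    (MvPolynomial.X 0 + MvPolynomial.C (b + 1) * MvPolynomial.X 6 - MvPolynomial.X 7)

/-!
The substitution `z₇ ↦ z₇ + c z₆` turns the linear factors `z₀ − b' z₆ + z₇` and
`z₀ + (b'+1) z₆ − z₇` of `Q_{b'}` into those of `Q_{b'−c}` and fixes the other factors, so
`c = b' − b` carries `Q_{b'}` to `Q_b`. That substitution is `(z₁, …, z₇) ↦ (z₁, …, z₇)·B` for
the transvection `B = 1 + (b' − b) E₆₇`, which is invertible.
-/

open MvPolynomial Matrix

theorem Matrix.exists_GL_coe_eq_transvection {n R : Type*} [Fintype n] [DecidableEq n]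
    [CommRing R] {i j : n} (hij : i ≠ j) (c : R) :
    ∃ B : GL n R, (B : Matrix n n R) = transvection i j c :=
  (isUnit_iff_isUnit_det _).2 (by rw [det_transvection_of_ne _ _ hij]; exact isUnit_one)

/-- The substitution `(z₀, z₁, …, zₙ) ↦ (z₀, (z₁, …, zₙ)·M)`. -/
noncomputable def linearSubst {n : ℕ} {R : Type*} [CommSemiring R]
    (M : Matrix (Fin n) (Fin n) R) : Fin (n + 1) → MvPolynomial (Fin (n + 1)) R :=
  Fin.cases (X 0) fun k => ∑ j, C (M j k) * X j.succ

theorem linearSubst_transvection {n : ℕ} {R : Type*} [CommRing R] (i j : Fin n) (c : R) :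
    linearSubst (transvection i j c) = Function.update X j.succ (X j.succ + C c * X i.succ) := by
  funext m
  cases m using Fin.cases with
  | zero => simp [linearSubst, (Fin.succ_ne_zero j).symm]
  | succ k =>
    by_cases hk : k = j
    · subst hk
      simp [linearSubst, transvection, add_mul, Finset.sum_add_distrib, one_apply, single_apply,
        apply_ite C, ite_mul]
    · simp [linearSubst, transvection, add_mul, Finset.sum_add_distrib, one_apply, single_apply,
        Ne.symm hk, hk]

theorem aeval_shear_Q52 (b c : ℂ) :
    aeval (Function.update X 7 (X 7 + C c * X 6)) (Q52 b) = Q52 (b - c) := by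
  simp only [Q52, map_mul, map_add, map_sub, map_pow, map_one, aeval_X, aeval_C, algebraMap_eq,
    Function.update_self, Function.update_of_ne (by decide : (0 : Fin 8) ≠ 7),
    Function.update_of_ne (by decide : (6 : Fin 8) ≠ 7)]
  ring

/-- non-rigidity of the family `𝔰_{5,2}^{1,1,b}`.  For all `b, b' ∈ ℂ` there
is an invertible `B ∈ GL₇(ℂ)` with `Q_{b'}(z₀, (z₁, …, z₇)·B) = Q_b(z₀, z₁, …, z₇)`;
explicitly, the matrix `B` equal to the identity except for the `(6,7)` entry (in the 1-based
numbering of the variables `z₁, …, z₇`), which equals `b' − b` — so that the substitution sends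
`z₇` to `z₇ + (b'−b)·z₆` and fixes all other variables — satisfies this identity.
Consequently all members of this family are spectrally equivalent: the family forms a single
spectral equivalence class. -/
theorem s52_family_single_spectral_class (b b' : ℂ) :
    ∃ B : GL (Fin 7) ℂ,
      (B : Matrix (Fin 7) (Fin 7) ℂ) =
        1 + Matrix.single (5 : Fin 7) (6 : Fin 7) (b' - b) ∧
      MvPolynomial.aeval
        (Fin.cases (MvPolynomial.X 0)
          (fun k : Fin 7 => ∑ j : Fin 7,
            MvPolynomial.C ((B : Matrix (Fin 7) (Fin 7) ℂ) j k) * MvPolynomial.X j.succ) :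
          Fin 8 → MvPolynomial (Fin 8) ℂ)
        (Q52 b') = Q52 b := by
  obtain ⟨B, hB⟩ := exists_GL_coe_eq_transvection (by decide : (5 : Fin 7) ≠ 6) (b' - b)
  refine ⟨B, hB, ?_⟩
  change aeval (linearSubst (B : Matrix (Fin 7) (Fin 7) ℂ)) (Q52 b') = Q52 b
  rw [hB, linearSubst_transvection]
  exact (aeval_shear_Q52 b' (b' - b)).trans (by rw [sub_sub_cancel])
end
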